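/- Let G=(N,L) be a directed graph with nonnegative link weights w, and let s,t be two nodes of G. Suppose every s–t path φ has a correlation coefficient satisfying 0 < ρ_min ≤ ρ(φ) ≤ ρ_max. Let ψ be a conventional shortest path, i.e., an s–t path minimizing the uncorrelated cost U, and let ψ_opt be an s–t path minimizing the correlated cost C, with ρ_opt = ρ(ψ_opt) and opt = C(ψ_opt). Then the correlated cost of the conventional shortest path satisfies C(ψ) ≤ max(ρ_max/ρ_opt, 1/ρ_min) · opt. -/

import Mathlib

/-! The conventional shortest path `ψ` is compared with `ψopt` through uncorrelated costs:
`C(ψ) ≤ ρmax · U(ψ) ≤ ρmax · U(ψopt) = (ρmax / ρopt) · C(ψopt)`, and taking the maximum only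
enlarges the factor. -/

/-- A walk from `s` to `t` along the links of a directed graph with link set `E`,
recorded as its list of visited nodes. -/
def IsPath {V : Type*} (E : Set (V × V)) (s t : V) (p : List V) : Prop :=
  p.head? = some s ∧ p.getLast? = some t ∧ p.Chain' (fun a b => (a, b) ∈ E)

/-- The uncorrelated cost of a path: the sum of the weights of its links. -/
def pathUCost {V : Type*} (w : V × V → ℝ) (p : List V) : ℝ :=
  ((p.zip p.tail).map w).sum

/-- The correlated (joint total) cost of a path under the deterministic
correlated model: its correlation coefficient times its uncorrelated cost. -/
def pathCCost {V : Type*} (ρ : List V → ℝ) (w : V × V → ℝ) (p : List V) : ℝ :=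
  ρ p * pathUCost w p

theorem pathUCost_nonneg {V : Type*} {w : V × V → ℝ} (hw : ∀ e, 0 ≤ w e) (p : List V) :
    0 ≤ pathUCost w p :=
  List.sum_nonneg fun _ hx => by
    obtain ⟨e, -, rfl⟩ := List.mem_map.mp hx
    exact hw e

theorem pathCCost_nonneg {V : Type*} {ρ : List V → ℝ} {w : V × V → ℝ} (hw : ∀ e, 0 ≤ w e)
    {p : List V} (hρp : 0 ≤ ρ p) : 0 ≤ pathCCost ρ w p :=
  mul_nonneg hρp (pathUCost_nonneg hw p)

theorem pathCCost_le_div_mul_pathCCost_of_pathUCost_le {V : Type*} {ρ : List V → ℝ}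
    {w : V × V → ℝ} (hw : ∀ e, 0 ≤ w e) {ψ φ : List V} {r : ℝ} (hr : 0 ≤ r)
    (hρψ : ρ ψ ≤ r) (hρφ : 0 < ρ φ) (hU : pathUCost w ψ ≤ pathUCost w φ) :
    pathCCost ρ w ψ ≤ r / ρ φ * pathCCost ρ w φ :=
  calc pathCCost ρ w ψ ≤ r * pathUCost w ψ :=
        mul_le_mul_of_nonneg_right hρψ (pathUCost_nonneg hw ψ)
    _ ≤ r * pathUCost w φ := mul_le_mul_of_nonneg_left hU hr
    _ = r / ρ φ * pathCCost ρ w φ := by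
        rw [pathCCost, ← mul_assoc, div_mul_cancel₀ _ hρφ.ne']

theorem conventional_shortest_path_general_correlation_bound_general
    {V : Type*} (E : Set (V × V)) (w : V × V → ℝ) (hw : ∀ e, 0 ≤ w e)
    (s t : V) (ρ : List V → ℝ) (ρmin ρmax : ℝ) (hρmin : 0 < ρmin)
    (hρ : ∀ p, IsPath E s t p → ρmin ≤ ρ p ∧ ρ p ≤ ρmax)
    (ψ ψopt : List V)
    (hψ : IsPath E s t ψ) (hψopt : IsPath E s t ψopt)
    (hmin : ∀ p, IsPath E s t p → pathUCost w ψ ≤ pathUCost w p) :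
    pathCCost ρ w ψ ≤ max (ρmax / ρ ψopt) (1 / ρmin) * pathCCost ρ w ψopt := by
  obtain ⟨hψmin, hψmax⟩ := hρ ψ hψ
  have hρopt : 0 < ρ ψopt := hρmin.trans_le (hρ ψopt hψopt).1
  have hρmax : 0 ≤ ρmax := (hρmin.trans_le hψmin).le.trans hψmax
  calc pathCCost ρ w ψ ≤ ρmax / ρ ψopt * pathCCost ρ w ψopt :=
        pathCCost_le_div_mul_pathCCost_of_pathUCost_le hw hρmax hψmax hρopt (hmin ψopt hψopt)
    _ ≤ max (ρmax / ρ ψopt) (1 / ρmin) * pathCCost ρ w ψopt :=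
        mul_le_mul_of_nonneg_right (le_max_left _ _) (pathCCost_nonneg hw hρopt.le)

/-- If every `s`–`t` path has correlation coefficient between `ρmin > 0` and `ρmax`, then a
conventional shortest path `ψ` has correlated cost at most
`max (ρmax / ρopt) (1 / ρmin) · opt`. -/
theorem conventional_shortest_path_general_correlation_bound
    {V : Type*} (E : Set (V × V)) (w : V × V → ℝ) (hw : ∀ e, 0 ≤ w e)
    (s t : V) (ρ : List V → ℝ) (ρmin ρmax : ℝ) (hρmin : 0 < ρmin)
    (hρ : ∀ p, IsPath E s t p → ρmin ≤ ρ p ∧ ρ p ≤ ρmax)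
    (ψ ψopt : List V)
    (hψ : IsPath E s t ψ) (hψopt : IsPath E s t ψopt)
    (hmin : ∀ p, IsPath E s t p → pathUCost w ψ ≤ pathUCost w p)
    (hoptmin : ∀ p, IsPath E s t p → pathCCost ρ w ψopt ≤ pathCCost ρ w p) :
    pathCCost ρ w ψ ≤ max (ρmax / ρ ψopt) (1 / ρmin) * pathCCost ρ w ψopt :=
  conventional_shortest_path_general_correlation_bound_general E w hw s t ρ ρmin ρmax hρmin hρ ψ
    ψopt hψ hψopt hmin
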